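/- In the product-of-surfaces setting with B̄ as above, the c-projective Weyl equation W^{[D̄]} = -(1/4)[B̄,B̄] - (1/(4·3))𝓑_J̄ ⊗ J̄ + (1/(8·3))𝓑 ∧ Id - (1/(8·3))𝓑_J̄ ∧ J̄ (where 𝓑(X,Y) = Tr(B̄_X B̄_Y)) holds if and only if Ric^D(u,u) = -(1/2)(as+bt), bs - at = 0, and Ric^{D'}(u',u') = -(s²+t²). -/

import Mathlib

set_option maxHeartbeats 16000000

/-! Statement 14: In the product-of-surfaces setting with the tensor `B̄`, the c-projective
Weyl equation
`W^{[D̄]} = -(1/4)[B̄,B̄] - (1/12)𝓑_J̄ ⊗ J̄ + (1/24)𝓑 ∧ Id - (1/24)𝓑_J̄ ∧ J̄`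
holds iff `Ric(u,u) = -(1/2)(as+bt)`, `bs - at = 0` and `Ric'(u',u') = -(s²+t²)`. -/

section
variable {V₁ V₂ : Type*} [AddCommGroup V₁] [Module ℝ V₁] [AddCommGroup V₂] [Module ℝ V₂]
  [FiniteDimensional ℝ V₁] [FiniteDimensional ℝ V₂]

/-- Inclusion of the first factor. -/
def iu (u : V₁) : V₁ × V₂ := (u, 0)

/-- Inclusion of the second factor. -/
def iv (v : V₂) : V₁ × V₂ := (0, v)

/-- The product complex structure `J̄ = J + J'`. -/
def Jb (J₁ : Module.End ℝ V₁) (J₂ : Module.End ℝ V₂) (X : V₁ × V₂) : V₁ × V₂ :=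
  (J₁ X.1, J₂ X.2)

/-- The product Ricci tensor. -/
def prodRic (Ric₁ : V₁ → V₁ → ℝ) (Ric₂ : V₂ → V₂ → ℝ) (X Y : V₁ × V₂) : ℝ :=
  Ric₁ X.1 Y.1 + Ric₂ X.2 Y.2

/-- The product curvature. -/
def prodCurv (R₁ : V₁ → V₁ → V₁ → V₁) (R₂ : V₂ → V₂ → V₂ → V₂) (X Y Z : V₁ × V₂) :
    V₁ × V₂ :=
  (R₁ X.1 Y.1 Z.1, R₂ X.2 Y.2 Z.2)

variable {α : Type*} [AddCommGroup α] [Module ℝ α]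

/-- The Rho tensor in real dimension 4 (n = 2). -/
noncomputable def rho4 (Ric : α → α → ℝ) (J : α → α) (X Y : α) : ℝ :=
  (1/3 : ℝ) * (Ric X Y + ((1/2 : ℝ) * (Ric X Y + Ric Y X)
      - (1/2 : ℝ) * (Ric (J X) (J Y) + Ric (J Y) (J X))))

/-- The c-projective Weyl curvature built from `R`, `P` and `J`. -/
noncomputable def weylOf (R : α → α → α → α) (P : α → α → ℝ) (J : α → α) (X Y Z : α) : α :=
  R X Y Z + ((1/2 : ℝ) * (P X Y - P Y X)) • Z
    - ((1/2 : ℝ) * (P X (J Y) - P Y (J X))) • J Z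
    + (1/2 : ℝ) • (P X Z • Y - P Y Z • X)
    - (1/2 : ℝ) • (P X (J Z) • J Y - P Y (J Z) • J X)

/-- The right-hand side
`-(1/4)[B,B] - (1/12)𝓑_J ⊗ J + (1/24)𝓑 ∧ Id - (1/24)𝓑_J ∧ J`
where `𝓑(X,Y) = Tr(B_X B_Y)` (here with `n = 2`). -/
noncomputable def weylRHS [FiniteDimensional ℝ α]
    (B : α →ₗ[ℝ] Module.End ℝ α) (J : α → α) (X Y Z : α) : α :=
  -(1/4 : ℝ) • (B X (B Y Z) - B Y (B X Z))
    - ((1/12 : ℝ) * LinearMap.trace ℝ α (B X * B (J Y))) • J Z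
    + (1/24 : ℝ) • ((LinearMap.trace ℝ α (B X * B Z)) • Y
        - (LinearMap.trace ℝ α (B Y * B Z)) • X)
    - (1/24 : ℝ) • ((LinearMap.trace ℝ α (B X * B (J Z))) • J Y
        - (LinearMap.trace ℝ α (B Y * B (J Z))) • J X)

section
variable {M N : Type*} [AddCommGroup M] [Module ℝ M] [AddCommGroup N] [Module ℝ N]

theorem lin_ext' {ι : Type*} (b : Module.Basis ι ℝ M) (f g : M → N)
    (hfa : ∀ x y, f (x + y) = f x + f y) (hfs : ∀ (c : ℝ) x, f (c • x) = c • f x)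
    (hga : ∀ x y, g (x + y) = g x + g y) (hgs : ∀ (c : ℝ) x, g (c • x) = c • g x)
    (h : ∀ i, f (b i) = g (b i)) (x : M) : f x = g x := by
  let F : M →ₗ[ℝ] N := ⟨⟨f, fun x y => hfa x y⟩, fun c x => hfs c x⟩
  let G : M →ₗ[ℝ] N := ⟨⟨g, fun x y => hga x y⟩, fun c x => hgs c x⟩
  have : F = G := Module.Basis.ext b h
  exact congrFun (congrArg (fun (L : M →ₗ[ℝ] N) => (L : M → N)) this) x

end

/-- Coefficients of `B` in the basis. -/
noncomputable def BC (a b s t : ℝ) : Fin 4 → Fin 4 → Fin 4 → ℝ :=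
![![![0,0,a,b], ![0,0,b,-a], ![s,t,0,0], ![t,-s,0,0]],
  ![![0,0,b,-a], ![0,0,-a,-b], ![t,-s,0,0], ![-s,-t,0,0]],
  ![![s,t,0,0], ![t,-s,0,0], ![0,0,0,0], ![0,0,0,0]],
  ![![t,-s,0,0], ![-s,-t,0,0], ![0,0,0,0], ![0,0,0,0]]]

/-- Coefficients of `J` in the basis. -/
noncomputable def JC : Fin 4 → Fin 4 → ℝ :=
![![0,1,0,0],![-1,0,0,0],![0,0,0,1],![0,0,-1,0]]

/-- Ricci coefficients for the curvature. -/
noncomputable def RA (r r' : ℝ) : Fin 4 → Fin 4 → ℝ :=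
![![0,-r,0,0],![r,0,0,0],![0,0,0,-r'],![0,0,r',0]]

/-- Same-factor indicator. -/
noncomputable def SF : Fin 4 → Fin 4 → ℝ :=
![![1,1,0,0],![1,1,0,0],![0,0,1,1],![0,0,1,1]]

/-- Rho tensor values. -/
noncomputable def PC (r r' : ℝ) : Fin 4 → Fin 4 → ℝ :=
![![r/3,0,0,0],![0,r/3,0,0],![0,0,r'/3,0],![0,0,0,r'/3]]

/-- Trace form values. -/
noncomputable def TRc (a b s t : ℝ) : Fin 4 → Fin 4 → ℝ :=
![![4*(a*s+b*t),0,0,0],![0,4*(a*s+b*t),0,0],![0,0,2*(s^2+t^2),0],![0,0,0,2*(s^2+t^2)]]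

/-- Coefficients of the composite `B_i ∘ B_j`. -/
noncomputable def DD (a b s t : ℝ) (i j k m : Fin 4) : ℝ :=
  ∑ p, BC a b s t j k p * BC a b s t i p m



theorem product_weyl_equation_iff
    (J₁ : Module.End ℝ V₁) (J₂ : Module.End ℝ V₂)
    (hJ₁ : ∀ X : V₁, J₁ (J₁ X) = -X) (hJ₂ : ∀ X : V₂, J₂ (J₂ X) = -X)
    (Ric₁ : V₁ →ₗ[ℝ] V₁ →ₗ[ℝ] ℝ) (Ric₂ : V₂ →ₗ[ℝ] V₂ →ₗ[ℝ] ℝ)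
    (hR₁sym : ∀ X Y : V₁, Ric₁ X Y = Ric₁ Y X)
    (hR₁herm : ∀ X Y : V₁, Ric₁ (J₁ X) (J₁ Y) = Ric₁ X Y)
    (hR₂sym : ∀ X Y : V₂, Ric₂ X Y = Ric₂ Y X)
    (hR₂herm : ∀ X Y : V₂, Ric₂ (J₂ X) (J₂ Y) = Ric₂ X Y)
    (R₁ : V₁ → V₁ → V₁ → V₁) (hR₁ : ∀ X Y Z : V₁, R₁ X Y Z = Ric₁ X (J₁ Y) • J₁ Z)
    (R₂ : V₂ → V₂ → V₂ → V₂) (hR₂ : ∀ X Y Z : V₂, R₂ X Y Z = Ric₂ X (J₂ Y) • J₂ Z)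
    (u : V₁) (u' : V₂) (a b s t : ℝ)
    (hdim : Module.finrank ℝ (V₁ × V₂) = 4)
    (hind : LinearIndependent ℝ
      ![(iu u : V₁ × V₂), iu (J₁ u), iv u', iv (J₂ u')])
    (B : (V₁ × V₂) →ₗ[ℝ] Module.End ℝ (V₁ × V₂))
    (hsym : ∀ X Y : V₁ × V₂, B X Y = B Y X)
    (hanti : ∀ X Y : V₁ × V₂, B X (Jb J₁ J₂ Y) = -Jb J₁ J₂ (B X Y))
    (h₁ : B (iu u) (iu u) = a • (iv u' : V₁ × V₂) + b • iv (J₂ u'))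
    (h₂ : B (iu (J₁ u)) (iu u) = b • (iv u' : V₁ × V₂) - a • iv (J₂ u'))
    (h₃ : B (iu (J₁ u)) (iu (J₁ u)) = -(a • (iv u' : V₁ × V₂) + b • iv (J₂ u')))
    (h₄ : B (iv u') (iv u') = 0)
    (h₅ : B (iv (J₂ u')) (iv u') = 0)
    (h₆ : B (iv u') (iv (J₂ u')) = 0)
    (h₇ : B (iv (J₂ u')) (iv (J₂ u')) = 0)
    (h₈ : B (iu u) (iv u') = s • (iu u : V₁ × V₂) + t • iu (J₁ u))
    (h₉ : B (iu (J₁ u)) (iv u') = t • (iu u : V₁ × V₂) - s • iu (J₁ u))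
    (h₁₀ : B (iu u) (iv (J₂ u')) = t • (iu u : V₁ × V₂) - s • iu (J₁ u))
    (h₁₁ : B (iu (J₁ u)) (iv (J₂ u')) = -(s • (iu u : V₁ × V₂) + t • iu (J₁ u))) :
    (∀ X Y Z : V₁ × V₂,
        weylOf (prodCurv R₁ R₂)
          (rho4 (prodRic (fun X Y => Ric₁ X Y) (fun X Y => Ric₂ X Y)) (Jb J₁ J₂))
          (Jb J₁ J₂) X Y Z = weylRHS B (Jb J₁ J₂) X Y Z)
      ↔ (Ric₁ u u = -(1/2 : ℝ)*(a*s + b*t) ∧ b*s - a*t = 0 ∧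
          Ric₂ u' u' = -(s^2 + t^2)) := by
  classical
  set V : Fin 4 → V₁ × V₂ := ![(iu u : V₁ × V₂), iu (J₁ u), iv u', iv (J₂ u')] with hV
  set Jm : V₁ × V₂ → V₁ × V₂ := Jb J₁ J₂ with hJm
  set Rm : (V₁ × V₂) → (V₁ × V₂) → (V₁ × V₂) → V₁ × V₂ := prodCurv R₁ R₂ with hRm
  set Pf : (V₁ × V₂) → (V₁ × V₂) → ℝ :=
    rho4 (prodRic (fun X Y => Ric₁ X Y) (fun X Y => Ric₂ X Y)) Jm with hPf
  have hind' : LinearIndependent ℝ V := by rw [hV]; exact hind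
  have hcard : Fintype.card (Fin 4) = Module.finrank ℝ (V₁ × V₂) := by simp [hdim]
  let bas : Module.Basis (Fin 4) ℝ (V₁ × V₂) := basisOfLinearIndependentOfCardEqFinrank hind' hcard
  have hbV : ∀ i, bas i = V i := fun i => by
    simp [bas, coe_basisOfLinearIndependentOfCardEqFinrank]
  have hrepr : ∀ p, bas.repr (V p) = Finsupp.single p 1 := fun p => by
    rw [← hbV p]; exact bas.repr_self p
  have tr_formula : ∀ f : (V₁ × V₂) →ₗ[ℝ] (V₁ × V₂),
      LinearMap.trace ℝ (V₁ × V₂) f = ∑ k, bas.repr (f (V k)) k := by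
    intro f
    rw [LinearMap.trace_eq_matrix_trace ℝ bas f]
    simp [Matrix.trace, LinearMap.toMatrix_apply, Matrix.diag, hbV]
  -- Ricci identities
  have r1a : Ric₁ (J₁ u) (J₁ u) = Ric₁ u u := hR₁herm u u
  have r1b : Ric₁ u (J₁ u) = 0 := by
    have h1 := hR₁herm u (J₁ u)
    rw [hJ₁, map_neg, hR₁sym (J₁ u) u] at h1
    linarith
  have r1c : Ric₁ (J₁ u) u = 0 := by rw [hR₁sym]; exact r1b
  have r2a : Ric₂ (J₂ u') (J₂ u') = Ric₂ u' u' := hR₂herm u' u'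
  have r2b : Ric₂ u' (J₂ u') = 0 := by
    have h1 := hR₂herm u' (J₂ u')
    rw [hJ₂, map_neg, hR₂sym (J₂ u') u'] at h1
    linarith
  have r2c : Ric₂ (J₂ u') u' = 0 := by rw [hR₂sym]; exact r2b
  -- J values and linearity
  have hJv : ∀ i, Jm (V i) = JC i 0 • V 0 + JC i 1 • V 1 + JC i 2 • V 2 + JC i 3 • V 3 := by
    intro i
    fin_cases i <;>
      simp [hV, hJm, Jb, JC, iu, iv, hJ₁, hJ₂, Prod.ext_iff, Matrix.vecHead, Matrix.vecTail]
  have hJa : ∀ x y, Jm (x + y) = Jm x + Jm y := by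
    intro x y; simp [hJm, Jb, Prod.ext_iff]
  have hJs : ∀ (c : ℝ) x, Jm (c • x) = c • Jm x := by
    intro c x; simp [hJm, Jb, Prod.ext_iff]
  -- P bilinearity and values
  have hPa1 : ∀ x x' y, Pf (x + x') y = Pf x y + Pf x' y := by
    intro x x' y
    simp [hPf, rho4, prodRic, hJm, Jb, map_add, LinearMap.add_apply]
    ring
  have hPs1 : ∀ (c : ℝ) x y, Pf (c • x) y = c * Pf x y := by
    intro c x y
    simp [hPf, rho4, prodRic, hJm, Jb, map_smul, LinearMap.smul_apply]
    ring
  have hPa2 : ∀ x y y', Pf x (y + y') = Pf x y + Pf x y' := by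
    intro x y y'
    simp [hPf, rho4, prodRic, hJm, Jb, map_add, LinearMap.add_apply]
    ring
  have hPs2 : ∀ (c : ℝ) x y, Pf x (c • y) = c * Pf x y := by
    intro c x y
    simp [hPf, rho4, prodRic, hJm, Jb, map_smul, LinearMap.smul_apply]
    ring
  have hPv : ∀ i j, Pf (V i) (V j) = PC (Ric₁ u u) (Ric₂ u' u') i j := by
    intro i j
    fin_cases i <;> fin_cases j <;>
      · simp [hV, hPf, rho4, prodRic, hJm, Jb, iu, iv, PC, hJ₁, hJ₂, r1a, r1b, r1c,
          r2a, r2b, r2c, Matrix.vecHead, Matrix.vecTail]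
        try ring
  -- curvature values and trilinearity
  have hRval : ∀ x y z, Rm x y z =
      (Ric₁ x.1 (J₁ y.1) • J₁ z.1, Ric₂ x.2 (J₂ y.2) • J₂ z.2) := by
    intro x y z; simp [hRm, prodCurv, hR₁, hR₂]
  have hRa1 : ∀ x x' y z, Rm (x + x') y z = Rm x y z + Rm x' y z := by
    intro x x' y z
    simp [hRval, map_add, LinearMap.add_apply, add_smul, smul_add, Prod.ext_iff]
  have hRs1 : ∀ (c : ℝ) x y z, Rm (c • x) y z = c • Rm x y z := by
    intro c x y z
    simp [hRval, map_smul, LinearMap.smul_apply, smul_smul, Prod.ext_iff, mul_comm]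
  have hRa2 : ∀ x y y' z, Rm x (y + y') z = Rm x y z + Rm x y' z := by
    intro x y y' z
    simp [hRval, map_add, LinearMap.add_apply, add_smul, smul_add, Prod.ext_iff]
  have hRs2 : ∀ (c : ℝ) x y z, Rm x (c • y) z = c • Rm x y z := by
    intro c x y z
    simp [hRval, map_smul, LinearMap.smul_apply, smul_smul, Prod.ext_iff, mul_comm]
  have hRa3 : ∀ x y z z', Rm x y (z + z') = Rm x y z + Rm x y z' := by
    intro x y z z'
    simp [hRval, map_add, LinearMap.add_apply, add_smul, smul_add, Prod.ext_iff]
  have hRs3 : ∀ (c : ℝ) x y z, Rm x y (c • z) = c • Rm x y z := by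
    intro c x y z
    simp [hRval, map_smul, LinearMap.smul_apply, smul_smul, Prod.ext_iff, smul_smul, mul_comm]
  have hRv : ∀ i j k, Rm (V i) (V j) (V k) =
      (RA (Ric₁ u u) (Ric₂ u' u') i j * SF i k * JC k 0) • V 0 +
      (RA (Ric₁ u u) (Ric₂ u' u') i j * SF i k * JC k 1) • V 1 +
      (RA (Ric₁ u u) (Ric₂ u' u') i j * SF i k * JC k 2) • V 2 +
      (RA (Ric₁ u u) (Ric₂ u' u') i j * SF i k * JC k 3) • V 3 := by
    intro i j k
    fin_cases i <;> fin_cases j <;> fin_cases k <;>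
      simp [hV, hRval, RA, SF, JC, iu, iv, hJ₁, hJ₂, r1b, r1c, r1a, r2a, r2b, r2c, Prod.ext_iff, Matrix.vecHead, Matrix.vecTail]
  -- B values
  have h₂' : B (iu u : V₁ × V₂) (iu (J₁ u)) = b • (iv u' : V₁ × V₂) - a • iv (J₂ u') := by
    rw [hsym]; exact h₂
  have h₈' : B (iv u' : V₁ × V₂) (iu u) = s • (iu u : V₁ × V₂) + t • iu (J₁ u) := by
    rw [hsym]; exact h₈
  have h₉' : B (iv u' : V₁ × V₂) (iu (J₁ u)) = t • (iu u : V₁ × V₂) - s • iu (J₁ u) := by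
    rw [hsym]; exact h₉
  have h₁₀' : B (iv (J₂ u') : V₁ × V₂) (iu u) = t • (iu u : V₁ × V₂) - s • iu (J₁ u) := by
    rw [hsym]; exact h₁₀
  have h₁₁' : B (iv (J₂ u') : V₁ × V₂) (iu (J₁ u))
      = -(s • (iu u : V₁ × V₂) + t • iu (J₁ u)) := by
    rw [hsym]; exact h₁₁
  have hBv : ∀ i j, B (V i) (V j) = BC a b s t i j 0 • V 0 + BC a b s t i j 1 • V 1 +
      BC a b s t i j 2 • V 2 + BC a b s t i j 3 • V 3 := by
    intro i j
    fin_cases i <;> fin_cases j <;>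
      · simp [hV, BC, h₁, h₂, h₂', h₃, h₄, h₅, h₆, h₇, h₈, h₉, h₁₀, h₁₁, h₈', h₉',
          h₁₀', h₁₁', Matrix.vecHead, Matrix.vecTail]
        try module
  -- composite values
  have hBB : ∀ i j k, (B (V i)) ((B (V j)) (V k)) =
      DD a b s t i j k 0 • V 0 + DD a b s t i j k 1 • V 1 +
      DD a b s t i j k 2 • V 2 + DD a b s t i j k 3 • V 3 := by
    intro i j k
    rw [hBv j k]
    simp only [map_add, map_smul, hBv i, DD, Fin.sum_univ_four]
    match_scalars <;> ring
  have hrc0 : ∀ c0 c1 c2 c3 : ℝ,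
      bas.repr (c0 • V 0 + c1 • V 1 + c2 • V 2 + c3 • V 3) 0 = c0 := by
    intro c0 c1 c2 c3
    simp [map_add, map_smul, hrepr, Finsupp.single_apply]
  have hrc1 : ∀ c0 c1 c2 c3 : ℝ,
      bas.repr (c0 • V 0 + c1 • V 1 + c2 • V 2 + c3 • V 3) 1 = c1 := by
    intro c0 c1 c2 c3
    simp [map_add, map_smul, hrepr, Finsupp.single_apply]
  have hrc2 : ∀ c0 c1 c2 c3 : ℝ,
      bas.repr (c0 • V 0 + c1 • V 1 + c2 • V 2 + c3 • V 3) 2 = c2 := by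
    intro c0 c1 c2 c3
    simp [map_add, map_smul, hrepr, Finsupp.single_apply]
  have hrc3 : ∀ c0 c1 c2 c3 : ℝ,
      bas.repr (c0 • V 0 + c1 • V 1 + c2 • V 2 + c3 • V 3) 3 = c3 := by
    intro c0 c1 c2 c3
    simp [map_add, map_smul, hrepr, Finsupp.single_apply]
  -- trace values
  have htr : ∀ i j, LinearMap.trace ℝ (V₁ × V₂) (B (V i) * B (V j)) = TRc a b s t i j := by
    intro i j
    rw [tr_formula, Fin.sum_univ_four]
    simp only [Module.End.mul_apply, hBB, hrc0, hrc1, hrc2, hrc3]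
    fin_cases i <;> fin_cases j <;>
      · simp [DD, BC, TRc, Fin.sum_univ_four, Matrix.vecHead, Matrix.vecTail]
        try ring
  have hPneg2 : ∀ x y, Pf x (-y) = -Pf x y := by
    intro x y
    simp [hPf, rho4, prodRic, hJm, Jb, map_neg]
    ring
  have hTneg : ∀ i j, LinearMap.trace ℝ (V₁ × V₂) (B (V i) * -B (V j))
      = -TRc a b s t i j := by
    intro i j
    have hmn : B (V i) * -B (V j) = -(B (V i) * B (V j)) := by
      refine LinearMap.ext fun w => ?_
      simp [Module.End.mul_apply]
    rw [hmn, map_neg, htr]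
  constructor
  · intro h
    have e1 := h (V 0) (V 1) (V 0)
    have e2 := h (V 2) (V 3) (V 2)
    simp [weylOf, weylRHS, hRv, hPv, hJv, hBv, htr, hPa2, hPs2, map_add, map_smul,
      map_neg, LinearMap.add_apply, LinearMap.smul_apply, add_mul, mul_add,
      smul_mul_assoc, mul_smul_comm, neg_mul, mul_neg, RA, SF, JC, PC, BC, TRc, Matrix.vecHead, Matrix.vecTail] at e1 e2
    simp [hPneg2, hPv, mul_neg, neg_mul, map_neg, htr, hTneg, PC, TRc, Matrix.vecHead,
      Matrix.vecTail] at e1 e2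
    have c0 := congrArg (fun w => bas.repr w 0) e1
    have c1 := congrArg (fun w => bas.repr w 1) e1
    have c3 := congrArg (fun w => bas.repr w 3) e2
    simp [map_add, map_smul, map_neg, map_sub, hrepr, Finsupp.single_apply] at c0 c1 c3
    refine ⟨by linarith, by linarith, by linarith⟩
  · rintro ⟨hρ, hbt, hρ'⟩
    -- trilinearity of both sides
    have hWa1 : ∀ x x' y z, weylOf Rm Pf Jm (x + x') y z
        = weylOf Rm Pf Jm x y z + weylOf Rm Pf Jm x' y z := by
      intro x x' y z
      simp only [weylOf, hRa1, hPa1, hPa2, hJa]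
      module
    have hWs1 : ∀ (c : ℝ) x y z, weylOf Rm Pf Jm (c • x) y z = c • weylOf Rm Pf Jm x y z := by
      intro c x y z
      simp only [weylOf, hRs1, hPs1, hPs2, hJs]
      module
    have hWa2 : ∀ x y y' z, weylOf Rm Pf Jm x (y + y') z
        = weylOf Rm Pf Jm x y z + weylOf Rm Pf Jm x y' z := by
      intro x y y' z
      simp only [weylOf, hRa2, hPa1, hPa2, hJa]
      module
    have hWs2 : ∀ (c : ℝ) x y z, weylOf Rm Pf Jm x (c • y) z = c • weylOf Rm Pf Jm x y z := by
      intro c x y z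
      simp only [weylOf, hRs2, hPs1, hPs2, hJs]
      module
    have hWa3 : ∀ x y z z', weylOf Rm Pf Jm x y (z + z')
        = weylOf Rm Pf Jm x y z + weylOf Rm Pf Jm x y z' := by
      intro x y z z'
      simp only [weylOf, hRa3, hPa1, hPa2, hJa]
      module
    have hWs3 : ∀ (c : ℝ) x y z, weylOf Rm Pf Jm x y (c • z) = c • weylOf Rm Pf Jm x y z := by
      intro c x y z
      simp only [weylOf, hRs3, hPs1, hPs2, hJs]
      module
    have hQa1 : ∀ x x' y z, weylRHS B Jm (x + x') y z
        = weylRHS B Jm x y z + weylRHS B Jm x' y z := by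
      intro x x' y z
      simp only [weylRHS, hJa, map_add, LinearMap.add_apply, add_mul, mul_add, smul_eq_mul]
      module
    have hQs1 : ∀ (c : ℝ) x y z, weylRHS B Jm (c • x) y z = c • weylRHS B Jm x y z := by
      intro c x y z
      simp only [weylRHS, hJs, map_smul, LinearMap.smul_apply, smul_mul_assoc,
        mul_smul_comm, smul_eq_mul]
      module
    have hQa2 : ∀ x y y' z, weylRHS B Jm x (y + y') z
        = weylRHS B Jm x y z + weylRHS B Jm x y' z := by
      intro x y y' z
      simp only [weylRHS, hJa, map_add, LinearMap.add_apply, add_mul, mul_add, smul_eq_mul]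
      module
    have hQs2 : ∀ (c : ℝ) x y z, weylRHS B Jm x (c • y) z = c • weylRHS B Jm x y z := by
      intro c x y z
      simp only [weylRHS, hJs, map_smul, LinearMap.smul_apply, smul_mul_assoc,
        mul_smul_comm, smul_eq_mul]
      module
    have hQa3 : ∀ x y z z', weylRHS B Jm x y (z + z')
        = weylRHS B Jm x y z + weylRHS B Jm x y z' := by
      intro x y z z'
      simp only [weylRHS, hJa, map_add, LinearMap.add_apply, add_mul, mul_add, smul_eq_mul]
      module
    have hQs3 : ∀ (c : ℝ) x y z, weylRHS B Jm x y (c • z) = c • weylRHS B Jm x y z := by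
      intro c x y z
      simp only [weylRHS, hJs, map_smul, LinearMap.smul_apply, smul_mul_assoc,
        mul_smul_comm, smul_eq_mul]
      module
    intro X Y Z
    refine lin_ext' bas (fun w => weylOf Rm Pf Jm w Y Z) (fun w => weylRHS B Jm w Y Z)
      (fun x y => hWa1 x y Y Z) (fun c x => hWs1 c x Y Z)
      (fun x y => hQa1 x y Y Z) (fun c x => hQs1 c x Y Z) ?_ X
    intro i
    rw [hbV i]
    refine lin_ext' bas (fun w => weylOf Rm Pf Jm (V i) w Z) (fun w => weylRHS B Jm (V i) w Z)
      (fun x y => hWa2 (V i) x y Z) (fun c x => hWs2 c (V i) x Z)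
      (fun x y => hQa2 (V i) x y Z) (fun c x => hQs2 c (V i) x Z) ?_ Y
    intro j
    rw [hbV j]
    refine lin_ext' bas (fun w => weylOf Rm Pf Jm (V i) (V j) w)
      (fun w => weylRHS B Jm (V i) (V j) w)
      (fun x y => hWa3 (V i) (V j) x y) (fun c x => hWs3 c (V i) (V j) x)
      (fun x y => hQa3 (V i) (V j) x y) (fun c x => hQs3 c (V i) (V j) x) ?_ Z
    intro k
    rw [hbV k]
    fin_cases i <;> fin_cases j <;> fin_cases k <;>
      · simp [weylOf, weylRHS, hRv, hPv, hJv, hBv, htr, hPa2, hPs2, map_add, map_smul,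
          map_neg, LinearMap.add_apply, LinearMap.smul_apply, add_mul, mul_add,
          smul_mul_assoc, mul_smul_comm, neg_mul, mul_neg, RA, SF, JC, PC, BC, TRc, Matrix.vecHead, Matrix.vecTail,
          hPneg2, hTneg, hρ, hρ']
        all_goals match_scalars <;>
          first
            | ring1
            | linear_combination hbt
            | linear_combination -hbt
            | linear_combination (1/2 : ℝ) * hbt
            | linear_combination (-(1/2) : ℝ) * hbt
            | linear_combination (1/4 : ℝ) * hbt
            | linear_combination (-(1/4) : ℝ) * hbt
            | linear_combination (1/3 : ℝ) * hbt
            | linear_combination (-(1/3) : ℝ) * hbt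
            | linear_combination (1/6 : ℝ) * hbt
            | linear_combination (-(1/6) : ℝ) * hbt
            | linear_combination (1/12 : ℝ) * hbt
            | linear_combination (-(1/12) : ℝ) * hbt
            | linear_combination (1/24 : ℝ) * hbt
            | linear_combination (-(1/24) : ℝ) * hbt
            | linear_combination (3/4 : ℝ) * hbt
            | linear_combination (-(3/4) : ℝ) * hbt
            | linear_combination (2 : ℝ) * hbt
            | linear_combination (-2 : ℝ) * hbt

end
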